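/- Define Q_n in ℚ[x, y, λ] by Q_0 = 1 and Q_n = (-1)^n C(λ, n) - x * sum_{k=1}^{n} (-1)^k C(y, k) Q_{n-k} for n ≥ 1. Then Q_n = sum_{m=0}^{n} sum_{i=m}^{n} sum_{j=m}^{i} (-1)^{m-i} (m!/n!) [n,i] C(i,j) {j,m} x^m λ^{i-j} y^j. -/

import Mathlib

open Finset

/-- Unsigned Stirling numbers of the first kind. -/
def stirling1 : ℕ → ℕ → ℕ
  | 0, 0 => 1
  | 0, _ + 1 => 0
  | _ + 1, 0 => 0
  | n + 1, k + 1 => n * stirling1 n (k + 1) + stirling1 n k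

/-- Stirling numbers of the second kind. -/
def stirling2 : ℕ → ℕ → ℕ
  | 0, 0 => 1
  | 0, _ + 1 => 0
  | _ + 1, 0 => 0
  | n + 1, k + 1 => (k + 1) * stirling2 n (k + 1) + stirling2 n k

/-- Generalized binomial coefficient `C(x, r) = x(x-1)⋯(x-r+1)/r!` in a ℚ-algebra. -/
noncomputable def gchoose {R : Type*} [CommRing R] [Algebra ℚ R] (x : R) (r : ℕ) : R :=
  algebraMap ℚ R ((r.factorial : ℚ)⁻¹) * ∏ i ∈ Finset.range r, (x - i)

/-!
Write `c_n(z) = (-1)^n C(z, n)`, the coefficient of `t^n` in `(1 - t)^z`. The recurrence says that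
`∑ Q_n t^n = (1 - t)^λ / (1 + x ((1 - t)^y - 1)) = ∑_m (-x)^m (1 - t)^λ ((1 - t)^y - 1)^m`, so the
coefficient of `x^m` in `Q_n` is `(-1)^m Δ^m f_n (0)`, where `f_n(r) = c_n(λ + r y)` and `Δ` is the
forward difference in `r`. By Chu–Vandermonde, `Δ f_n = ∑_{k ≥ 1} c_k(y) f_{n-k}`, which is exactly
the recurrence, read off coefficientwise in `x`. On the other hand `f_n(r)` is a polynomial in `r`
whose coefficients come from expanding the rising factorial with Stirling numbers of the first kind,
and `Δ^m r^j (0) = m! {j, m}`; this gives the closed form.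
-/

open fwdDiff

theorem stirling1_eq_stirlingFirst : stirling1 = Nat.stirlingFirst := by
  funext n k
  induction n generalizing k with
  | zero => cases k <;> rfl
  | succ n ih => cases k <;> simp [stirling1, Nat.stirlingFirst_succ_succ, ih]

theorem stirling2_eq_stirlingSecond : stirling2 = Nat.stirlingSecond := by
  funext n k
  induction n generalizing k with
  | zero => cases k <;> rfl
  | succ n ih => cases k <;> simp [stirling2, Nat.stirlingSecond_succ_succ, ih]

theorem prod_range_add_natCast_eq_sum_stirlingFirst {R : Type*} [CommSemiring R] (w : R) (n : ℕ) :
    ∏ i ∈ range n, (w + i) = ∑ i ∈ range (n + 1), (Nat.stirlingFirst n i : R) * w ^ i := by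
  induction n with
  | zero => simp
  | succ n ih =>
    have hshift : ∑ i ∈ range (n + 1), (Nat.stirlingFirst n i : R) * w ^ i * n =
        ∑ i ∈ range (n + 1), (n * Nat.stirlingFirst n (i + 1) : R) * w ^ (i + 1) := by
      rw [sum_range_succ', sum_range_succ _ n]
      rcases n with _ | n
      · simp
      · simp only [Nat.stirlingFirst_eq_zero_of_lt (Nat.lt_succ_self _),
          Nat.stirlingFirst_succ_zero]
        push_cast
        simp only [zero_mul, mul_zero, add_zero]
        exact sum_congr rfl fun _ _ => by ring
    rw [prod_range_succ, ih, sum_range_succ' _ (n + 1), mul_add, sum_mul, sum_mul, hshift,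
      ← sum_add_distrib]
    simp only [Nat.stirlingFirst_succ_succ, Nat.stirlingFirst_succ_zero]
    push_cast
    simp only [zero_mul, add_zero]
    exact sum_congr rfl fun i _ => by ring

section fwdDiff

variable {R : Type*} [CommRing R]

theorem fwdDiff_iter_succ_apply (f : R → R) (n : ℕ) (y : R) :
    Δ_[1] ^[n + 1] f y = Δ_[1] ^[n] f (y + 1) - Δ_[1] ^[n] f y :=
  Function.iterate_succ_apply' (fwdDiff 1) n f ▸ rfl

theorem fwdDiff_iter_succ_id_mul (g : R → R) (n : ℕ) (y : R) :
    Δ_[1] ^[n + 1] (fun r => r * g r) y =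
      y * Δ_[1] ^[n + 1] g y + (n + 1) * Δ_[1] ^[n] g (y + 1) := by
  induction n generalizing y with
  | zero => simp only [fwdDiff_iter_succ_apply, Function.iterate_zero_apply]; ring
  | succ n ih =>
    have h1 := fwdDiff_iter_succ_apply g (n + 1) y
    have h2 := fwdDiff_iter_succ_apply g n (y + 1)
    rw [fwdDiff_iter_succ_apply, ih, ih]
    push_cast
    linear_combination (-y) * h1 - (n + 1) * h2

theorem fwdDiff_iter_pow_apply_zero (j n : ℕ) :
    Δ_[1] ^[n] (fun r : R => r ^ j) 0 = n.factorial * Nat.stirlingSecond j n := by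
  induction j generalizing n with
  | zero =>
    cases n with
    | zero => simp
    | succ n => simpa using congrFun (fwdDiff_iter_pow_eq_zero_of_lt (R := R) (Nat.succ_pos n)) 0
  | succ j ih =>
    cases n with
    | zero => simp
    | succ n =>
      have hshift : Δ_[1] ^[n] (fun r : R => r ^ j) (0 + 1) =
          Δ_[1] ^[n] (fun r : R => r ^ j) 0 + Δ_[1] ^[n + 1] (fun r : R => r ^ j) 0 := by
        rw [Function.iterate_succ_apply' (fwdDiff 1), fwdDiff]; ring
      simp only [pow_succ', fwdDiff_iter_succ_id_mul, hshift, ih, Nat.stirlingSecond_succ_succ,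
        Nat.factorial_succ]
      push_cast
      ring

end fwdDiff

theorem descPochhammer_smeval_eq_prod_range {R : Type*} [CommRing R] (r : R) (n : ℕ) :
    (descPochhammer ℤ n).smeval r = ∏ j ∈ range n, (r - j) := by
  rw [← Polynomial.aeval_eq_smeval, ← Polynomial.eval_map_algebraMap, descPochhammer_map,
    descPochhammer_eval_eq_prod_range]

theorem sum_range_succ_eq_add_sum_Icc {M : Type*} [AddCommMonoid M] (f : ℕ → M) (n : ℕ) :
    ∑ k ∈ range (n + 1), f k = f 0 + ∑ k ∈ Icc 1 n, f k := by
  rw [sum_range_eq_add_Ico f n.succ_pos, Nat.succ_eq_add_one, Finset.Ico_add_one_right_eq_Icc]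

theorem sum_range_sum_range_eq_sum_Icc_sum_Icc {M : Type*} [AddCommMonoid M] {m : ℕ}
    (F : ℕ → ℕ → M) (hF : ∀ i j, j < m → F i j = 0) (n : ℕ) :
    ∑ i ∈ range (n + 1), ∑ j ∈ range (i + 1), F i j = ∑ i ∈ Icc m n, ∑ j ∈ Icc m i, F i j := by
  have hinner (i : ℕ) : ∑ j ∈ range (i + 1), F i j = ∑ j ∈ Icc m i, F i j := by
    refine (sum_subset (fun j hj => ?_) fun j hj hj' => hF i j ?_).symm
    · simp only [mem_Icc, mem_range] at hj ⊢; omega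
    · simp only [mem_Icc, mem_range] at hj hj'; omega
  simp only [hinner]
  refine (sum_subset (fun i hi => ?_) fun i hi hi' => sum_eq_zero fun j hj => ?_).symm
  · simp only [mem_Icc, mem_range] at hi ⊢; omega
  · simp only [mem_Icc, mem_range] at hi hi' hj; omega

section gchoose

variable {R : Type*} [CommRing R] [Algebra ℚ R]

theorem gchoose_zero_right (z : R) : gchoose z 0 = 1 := by
  simp [gchoose]

theorem gchoose_add (a b : R) (n : ℕ) :
    gchoose (a + b) n = ∑ k ∈ range (n + 1), gchoose a k * gchoose b (n - k) := by
  simp only [gchoose, ← descPochhammer_smeval_eq_prod_range]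
  rw [Ring.descPochhammer_smeval_add n (Commute.all a b),
    Nat.sum_antidiagonal_eq_sum_range_succ (fun i j => (n.choose i : R) *
      ((descPochhammer ℤ i).smeval a * (descPochhammer ℤ j).smeval b)), mul_sum]
  refine sum_congr rfl fun k hk => ?_
  have hfac : (n.factorial : ℚ)⁻¹ * n.choose k =
      (k.factorial : ℚ)⁻¹ * ((n - k).factorial : ℚ)⁻¹ := by
    rw [Nat.cast_choose ℚ (Nat.lt_succ_iff.mp (mem_range.mp hk))]
    field_simp
  have hcast : (n.choose k : R) = algebraMap ℚ R (n.choose k) := by simp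
  rw [hcast, ← mul_assoc, ← map_mul, hfac, map_mul]
  ring

theorem neg_one_pow_mul_gchoose (z : R) (n : ℕ) :
    (-1) ^ n * gchoose z n = ∑ i ∈ range (n + 1),
      algebraMap ℚ R ((n.factorial : ℚ)⁻¹) * Nat.stirlingFirst n i * (-z) ^ i := by
  have hneg : ∏ i ∈ range n, (-z + i) = (-1) ^ n * ∏ i ∈ range n, (z - i) := by
    have h := prod_neg (s := range n) fun i : ℕ => z - i
    rw [card_range] at h
    rw [← h]
    exact prod_congr rfl fun _ _ => by ring
  rw [gchoose, mul_left_comm, ← hneg, prod_range_add_natCast_eq_sum_stirlingFirst, mul_sum]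
  exact sum_congr rfl fun _ _ => by ring

end gchoose

section qCoeff

variable {R : Type*} [CommRing R] [Algebra ℚ R]

noncomputable def qCoeff (l y : R) (n m : ℕ) : R :=
  (-1) ^ m * Δ_[1] ^[m] (fun r => (-1) ^ n * gchoose (l + r * y) n) 0

theorem fwdDiff_neg_one_pow_mul_gchoose (l y : R) (n : ℕ) :
    Δ_[1] (fun r => (-1) ^ n * gchoose (l + r * y) n) =
      ∑ k ∈ Icc 1 n, ((-1) ^ k * gchoose y k) •
        fun r => (-1) ^ (n - k) * gchoose (l + r * y) (n - k) := by
  funext r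
  have hvandermonde : (-1) ^ n * gchoose (l + (r + 1) * y) n = ∑ k ∈ range (n + 1),
      (-1) ^ k * gchoose y k * ((-1) ^ (n - k) * gchoose (l + r * y) (n - k)) := by
    rw [show l + (r + 1) * y = y + (l + r * y) by ring, gchoose_add, mul_sum]
    refine sum_congr rfl fun k hk => ?_
    have hsign : (-1 : R) ^ n = (-1) ^ k * (-1) ^ (n - k) := by
      rw [← pow_add, Nat.add_sub_cancel' (mem_range_succ_iff.mp hk)]
    rw [hsign]
    ring
  simp only [fwdDiff, Finset.sum_apply, Pi.smul_apply, smul_eq_mul]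
  rw [hvandermonde, sum_range_succ_eq_add_sum_Icc]
  simp [gchoose_zero_right]

theorem qCoeff_zero_right (l y : R) (n : ℕ) : qCoeff l y n 0 = (-1) ^ n * gchoose l n := by
  simp [qCoeff]

theorem qCoeff_succ_right (l y : R) (n m : ℕ) :
    qCoeff l y n (m + 1) = -∑ k ∈ Icc 1 n, (-1) ^ k * gchoose y k * qCoeff l y (n - k) m := by
  simp only [qCoeff, Function.iterate_succ_apply, fwdDiff_neg_one_pow_mul_gchoose,
    fwdDiff_iter_finsetSum, fwdDiff_iter_const_smul, Finset.sum_apply, Pi.smul_apply, smul_eq_mul,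
    mul_sum, ← sum_neg_distrib]
  exact sum_congr rfl fun _ _ => by ring

theorem qCoeff_eq_sum (l y : R) (n m : ℕ) :
    qCoeff l y n m = ∑ i ∈ Icc m n, ∑ j ∈ Icc m i,
      (-1) ^ (i - m) * algebraMap ℚ R ((m.factorial : ℚ) / n.factorial) *
        Nat.stirlingFirst n i * i.choose j * Nat.stirlingSecond j m * l ^ (i - j) * y ^ j := by
  have hpoly : (fun r => (-1) ^ n * gchoose (l + r * y) n) =
      ∑ i ∈ range (n + 1), ∑ j ∈ range (i + 1),
        (algebraMap ℚ R ((n.factorial : ℚ)⁻¹) * Nat.stirlingFirst n i *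
          ((-1) ^ i * i.choose j * l ^ (i - j) * y ^ j)) • fun r : R => r ^ j := by
    funext r
    simp only [Finset.sum_apply, Pi.smul_apply, smul_eq_mul, neg_one_pow_mul_gchoose]
    refine sum_congr rfl fun i _ => ?_
    rw [show -(l + r * y) = -1 * (r * y + l) by ring, mul_pow, add_pow, mul_sum, mul_sum]
    exact sum_congr rfl fun j _ => by ring
  rw [qCoeff, hpoly]
  simp only [fwdDiff_iter_finsetSum, fwdDiff_iter_const_smul, Finset.sum_apply, Pi.smul_apply,
    smul_eq_mul, fwdDiff_iter_pow_apply_zero, mul_sum]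
  rw [sum_range_sum_range_eq_sum_Icc_sum_Icc (m := m) _ (fun i j hj => by
    simp [Nat.stirlingSecond_eq_zero_of_lt hj])]
  refine sum_congr rfl fun i hi => sum_congr rfl fun j _ => ?_
  obtain ⟨d, rfl⟩ := Nat.exists_eq_add_of_le (mem_Icc.mp hi).1
  have hsign : (-1 : R) ^ m * (-1) ^ (m + d) = (-1) ^ (m + d - m) := by
    rw [Nat.add_sub_cancel_left, pow_add, ← mul_assoc, ← pow_add, Even.neg_one_pow ⟨m, rfl⟩,
      one_mul]
  rw [← hsign, div_eq_mul_inv, map_mul, map_natCast]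
  ring

theorem qCoeff_eq_zero_of_lt (l y : R) {n m : ℕ} (h : n < m) : qCoeff l y n m = 0 := by
  rw [qCoeff_eq_sum, Icc_eq_empty (by omega), sum_empty]

theorem sum_pow_mul_qCoeff (x l y : R) (n : ℕ) :
    ∑ m ∈ range (n + 1), x ^ m * qCoeff l y n m =
      (-1) ^ n * gchoose l n - x * ∑ k ∈ Icc 1 n, (-1) ^ k * gchoose y k *
        ∑ m ∈ range (n - k + 1), x ^ m * qCoeff l y (n - k) m := by
  have htrunc : ∀ k ∈ Icc 1 n, ∑ m ∈ range (n - k + 1), x ^ m * qCoeff l y (n - k) m =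
      ∑ m ∈ range n, x ^ m * qCoeff l y (n - k) m := by
    intro k hk
    rw [mem_Icc] at hk
    refine sum_subset (fun m hm => ?_) fun m _ hm => ?_
    · simp only [mem_range] at hm ⊢; omega
    · rw [qCoeff_eq_zero_of_lt l y (by simp only [mem_range] at hm; omega), mul_zero]
  have hswap : x * ∑ k ∈ Icc 1 n, (-1) ^ k * gchoose y k *
        ∑ m ∈ range n, x ^ m * qCoeff l y (n - k) m =
      ∑ m ∈ range n,
        x ^ (m + 1) * ∑ k ∈ Icc 1 n, (-1) ^ k * gchoose y k * qCoeff l y (n - k) m := by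
    simp only [mul_sum]
    rw [sum_comm]
    exact sum_congr rfl fun _ _ => sum_congr rfl fun _ _ => by ring
  rw [sum_congr rfl fun k hk => congrArg _ (htrunc k hk), hswap, sum_range_succ', qCoeff_zero_right]
  simp only [qCoeff_succ_right, mul_neg, sum_neg_distrib]
  ring

end qCoeff

theorem stmt10_general (Q : ℕ → MvPolynomial (Fin 3) ℚ)
    (x y l : MvPolynomial (Fin 3) ℚ)
    (hQ0 : Q 0 = 1)
    (hQ : ∀ n : ℕ, 1 ≤ n →
      Q n = (-1) ^ n * gchoose l n -
        x * ∑ k ∈ Finset.Icc 1 n, (-1) ^ k * gchoose y k * Q (n - k)) :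
    ∀ n : ℕ, Q n = ∑ m ∈ Finset.range (n + 1), ∑ i ∈ Finset.Icc m n, ∑ j ∈ Finset.Icc m i,
      (-1) ^ (i - m) * (algebraMap ℚ (MvPolynomial (Fin 3) ℚ)
          ((m.factorial : ℚ) / n.factorial)) *
        stirling1 n i * i.choose j * stirling2 j m * x ^ m * l ^ (i - j) * y ^ j := by
  have hclosed (n : ℕ) : ∑ m ∈ range (n + 1), ∑ i ∈ Icc m n, ∑ j ∈ Icc m i,
      (-1) ^ (i - m) * (algebraMap ℚ (MvPolynomial (Fin 3) ℚ) ((m.factorial : ℚ) / n.factorial)) *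
        stirling1 n i * i.choose j * stirling2 j m * x ^ m * l ^ (i - j) * y ^ j =
      ∑ m ∈ range (n + 1), x ^ m * qCoeff l y n m := by
    refine sum_congr rfl fun m _ => ?_
    simp only [qCoeff_eq_sum, mul_sum, stirling1_eq_stirlingFirst, stirling2_eq_stirlingSecond]
    exact sum_congr rfl fun _ _ => sum_congr rfl fun _ _ => by ring
  intro n
  induction n using Nat.strong_induction_on with
  | _ n ih =>
  rw [hclosed]
  rcases Nat.eq_zero_or_pos n with rfl | hn
  · simp [hQ0, qCoeff_zero_right, gchoose_zero_right]
  · rw [hQ n hn, sum_pow_mul_qCoeff]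
    refine congrArg _ (congrArg _ (sum_congr rfl fun k hk => ?_))
    rw [ih (n - k) (by simp only [mem_Icc] at hk; omega), hclosed]

open MvPolynomial in
theorem stmt10 (Q : ℕ → MvPolynomial (Fin 3) ℚ)
    (x y l : MvPolynomial (Fin 3) ℚ) (hx : x = X 0) (hy : y = X 1) (hl : l = X 2)
    (hQ0 : Q 0 = 1)
    (hQ : ∀ n : ℕ, 1 ≤ n →
      Q n = (-1) ^ n * gchoose l n -
        x * ∑ k ∈ Finset.Icc 1 n, (-1) ^ k * gchoose y k * Q (n - k)) :
    ∀ n : ℕ, Q n = ∑ m ∈ Finset.range (n + 1), ∑ i ∈ Finset.Icc m n, ∑ j ∈ Finset.Icc m i,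
      (-1) ^ (i - m) * (algebraMap ℚ (MvPolynomial (Fin 3) ℚ)
          ((m.factorial : ℚ) / n.factorial)) *
        stirling1 n i * i.choose j * stirling2 j m * x ^ m * l ^ (i - j) * y ^ j :=
  stmt10_general Q x y l hQ0 hQ
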